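/- For an oriented hypergraph G with adjacency matrix A_G, perm(A_G) = ∑_{c ∈ C_0(G)} (−1)^{nc(c)} and det(A_G) = ∑_{c ∈ C_0(G)} (−1)^{ec(c)+nc(c)}, where C_0(G) is the set of backstep-free contributors (strong contributors) of G, and ec(c), nc(c) count even and negative circles in c. -/
import Mathlib


open scoped Classical

/-- An oriented hypergraph on vertex set `V`: edges `E`, incidences `I`,
incidence function given by `vtx` and `edge`, and incidence orientations `sgn`. -/
structure OrientedHypergraph (V : Type) [Fintype V] [DecidableEq V] where
  E : Type
  I : Type
  [fintypeE : Fintype E]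
  [fintypeI : Fintype I]
  [decEqI : DecidableEq I]
  vtx : I → V
  edge : I → E
  sgn : I → ℤ

attribute [instance] OrientedHypergraph.fintypeE OrientedHypergraph.fintypeI
  OrientedHypergraph.decEqI

variable {V : Type} [Fintype V] [DecidableEq V]

/-- A bidirected graph: an oriented hypergraph in which every edge has exactly two
incidences, recorded by the fixed-point-free involution `τ` pairing the two
incidences of each edge. -/
structure Bidirected (V : Type) [Fintype V] [DecidableEq V]
    extends OrientedHypergraph V where
  τ : I → I
  τ_invol : ∀ i, τ (τ i) = i
  τ_ne : ∀ i, τ i ≠ i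
  τ_edge : ∀ i, edge (τ i) = edge i
  edge_two : ∀ i j, edge i = edge j → j = i ∨ j = τ i

/-- A pre-contributor: an incidence-preserving map of `|V|` disjoint directed paths
of length one into `G`, sending the tail `t_v` to `v`.  The component at `v` is the
weak walk with tail incidence `i1 v` and head incidence `i2 v`. -/
structure PreContributor (G : OrientedHypergraph V) where
  i1 : V → G.I
  i2 : V → G.I
  tail_eq : ∀ v, G.vtx (i1 v) = v
  edge_eq : ∀ v, G.edge (i1 v) = G.edge (i2 v)

namespace PreContributor

variable {G : OrientedHypergraph V}

/-- The head vertex of the component of `p` at `v`: `p(h_v)`. -/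
def head (p : PreContributor G) (v : V) : V := G.vtx (p.i2 v)

/-- A contributor: a pre-contributor whose heads cover `V`, `{p(h_v) | v ∈ V} = V`. -/
def IsContributor (p : PreContributor G) : Prop := Function.Surjective p.head

/-- The component of `p` at `v` is a backstep `(v,i,e,i,v)`. -/
def BackstepAt (p : PreContributor G) (v : V) : Prop := p.i2 v = p.i1 v

/-- The sign of the length-one weak walk of `p` at `v`. -/
def walkSign (p : PreContributor G) (v : V) : ℤ := -(G.sgn (p.i1 v) * G.sgn (p.i2 v))

/-- Two vertices lie in the same component of the image of `p`. -/
def compRel (p : PreContributor G) : V → V → Prop :=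
  Relation.EqvGen (fun v w => p.head v = w)

/-- The setoid of components of `p`. -/
def compSetoid (p : PreContributor G) : Setoid V := Relation.EqvGen.setoid (fun v w => p.head v = w)

/-- A component class is a (lone) backstep. -/
def IsBackstepClass (p : PreContributor G) (q : Quotient p.compSetoid) : Prop :=
  ∃ v, Quotient.mk p.compSetoid v = q ∧ p.head v = v ∧ p.BackstepAt v

/-- The number of vertices in a component class. -/
noncomputable def compCard (p : PreContributor G) (q : Quotient p.compSetoid) : ℕ :=
  Nat.card {v : V // Quotient.mk p.compSetoid v = q}

/-- The sign of a component class: the product of the signs of its weak walks. -/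
noncomputable def compSign (p : PreContributor G) (q : Quotient p.compSetoid) : ℤ :=
  ∏ᶠ v ∈ {v : V | Quotient.mk p.compSetoid v = q}, p.walkSign v

/-- `tc`: total number of circles of a contributor (backsteps do not count). -/
noncomputable def tc (p : PreContributor G) : ℕ :=
  Nat.card {q : Quotient p.compSetoid // ¬ p.IsBackstepClass q}

/-- `pc`: number of positive circles of a contributor. -/
noncomputable def pc (p : PreContributor G) : ℕ :=
  Nat.card {q : Quotient p.compSetoid // ¬ p.IsBackstepClass q ∧ p.compSign q = 1}

/-- `nc`: number of negative circles of a contributor. -/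
noncomputable def nc (p : PreContributor G) : ℕ :=
  Nat.card {q : Quotient p.compSetoid // ¬ p.IsBackstepClass q ∧ p.compSign q = -1}

/-- `oc`: number of odd circles of a contributor. -/
noncomputable def oc (p : PreContributor G) : ℕ :=
  Nat.card {q : Quotient p.compSetoid // ¬ p.IsBackstepClass q ∧ Odd (p.compCard q)}

/-- `ec`: number of even circles of a contributor. -/
noncomputable def ec (p : PreContributor G) : ℕ :=
  Nat.card {q : Quotient p.compSetoid // ¬ p.IsBackstepClass q ∧ Even (p.compCard q)}

end PreContributor

/-- The `V × E` incidence matrix of an oriented hypergraph. -/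
noncomputable def OrientedHypergraph.inc (G : OrientedHypergraph V) : Matrix V G.E ℤ :=
  fun v e => ∑ᶠ i ∈ {i : G.I | G.vtx i = v ∧ G.edge i = e}, G.sgn i

/-- The oriented hypergraphic Laplacian `L_G = H_G H_Gᵀ`. -/
noncomputable def OrientedHypergraph.lap (G : OrientedHypergraph V) : Matrix V V ℤ :=
  G.inc * G.inc.transpose

namespace Bidirected

variable {G : Bidirected V}

/-- Packing the directed adjacency of `p` at `v` into a backstep. -/
def pack (G : Bidirected V) (p : PreContributor G.toOrientedHypergraph) (v : V) :
    PreContributor G.toOrientedHypergraph where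
  i1 := p.i1
  i2 := fun u => if u = v then p.i1 v else p.i2 u
  tail_eq := p.tail_eq
  edge_eq := fun u => by by_cases h : u = v <;> simp [h, p.edge_eq u]

/-- Unpacking the backstep of `p` at `v` into the unique directed adjacency out of
`v` completing the edge. -/
def unpack (G : Bidirected V) (p : PreContributor G.toOrientedHypergraph) (v : V) :
    PreContributor G.toOrientedHypergraph where
  i1 := p.i1
  i2 := fun u => if u = v then G.τ (p.i1 v) else p.i2 u
  tail_eq := p.tail_eq
  edge_eq := fun u => by
    by_cases h : u = v
    · simp [h, G.τ_edge]
    · simp [h, p.edge_eq u]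

end Bidirected

/-- The adjacency matrix of an oriented hypergraph: the `(v,w)`-entry is the number
of positive adjacencies minus the number of negative adjacencies from `v` to `w`,
where an adjacency `(v,i,e,j,w)` with `i ≠ j` has sign `−σ(i)σ(j)`. -/
noncomputable def OrientedHypergraph.adjMatrix {V : Type} [Fintype V] [DecidableEq V]
    (G : OrientedHypergraph V) : Matrix V V ℤ :=
  fun v w => ∑ᶠ ω ∈ {ω : G.I × G.I | ω.1 ≠ ω.2 ∧
      G.edge ω.1 = G.edge ω.2 ∧ G.vtx ω.1 = v ∧ G.vtx ω.2 = w},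
    -(G.sgn ω.1 * G.sgn ω.2)

/-- A strong contributor: a backstep-free (incidence-monic) contributor. -/
def PreContributor.IsStrongContributor {V : Type} [Fintype V] [DecidableEq V]
    {G : OrientedHypergraph V} (c : PreContributor G) : Prop :=
  c.IsContributor ∧ ∀ v, ¬ c.BackstepAt v

section AuxDev

open Finset

variable {V : Type} [Fintype V] [DecidableEq V] {G : OrientedHypergraph V}

namespace PreContributor

lemma ext' {p q : PreContributor G} (h1 : p.i1 = q.i1) (h2 : p.i2 = q.i2) : p = q := by
  cases p; cases q; simp_all

instance : Finite (PreContributor G) :=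
  Finite.of_injective (fun p => (p.i1, p.i2)) (by
    intro p q h
    exact ext' (congrArg Prod.fst h) (congrArg Prod.snd h))

noncomputable instance : Fintype (PreContributor G) := Fintype.ofFinite _

noncomputable instance fintypeQuot (c : PreContributor G) : Fintype (Quotient c.compSetoid) :=
  Fintype.ofFinite _

end PreContributor

/-- L1: adjacency entry as a Finset sum. -/
lemma adj_entry (G : OrientedHypergraph V) (v w : V) :
    G.adjMatrix v w = ∑ ω ∈ Finset.univ.filter (fun ω : G.I × G.I => ω.1 ≠ ω.2 ∧
      G.edge ω.1 = G.edge ω.2 ∧ G.vtx ω.1 = v ∧ G.vtx ω.2 = w),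
      -(G.sgn ω.1 * G.sgn ω.2) := by
  rw [OrientedHypergraph.adjMatrix]
  rw [show {ω : G.I × G.I | ω.1 ≠ ω.2 ∧ G.edge ω.1 = G.edge ω.2 ∧ G.vtx ω.1 = v ∧
        G.vtx ω.2 = w} = ↑(Finset.univ.filter (fun ω : G.I × G.I => ω.1 ≠ ω.2 ∧
      G.edge ω.1 = G.edge ω.2 ∧ G.vtx ω.1 = v ∧ G.vtx ω.2 = w)) by ext; simp]
  exact finsum_mem_coe_finset _ _

/-- helper to build a `PreContributor` from a pair-valued function. -/
def mkPC (g : V → G.I × G.I) (h : ∀ v, G.vtx (g v).1 = v ∧ G.edge (g v).1 = G.edge (g v).2) :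
    PreContributor G :=
  ⟨fun v => (g v).1, fun v => (g v).2, fun v => (h v).1, fun v => (h v).2⟩

/-- L2: expanding a product of adjacency entries over a permutation. -/
lemma prod_adj (G : OrientedHypergraph V) (σ : Equiv.Perm V) :
    ∏ v, G.adjMatrix v (σ v) =
      ∑ c ∈ Finset.univ.filter (fun c : PreContributor G =>
        (∀ v, ¬ c.BackstepAt v) ∧ c.head = ⇑σ), ∏ v, c.walkSign v := by
  simp only [adj_entry]
  rw [Finset.prod_univ_sum]
  refine Finset.sum_bij'
    (i := fun g hg => mkPC g (fun v => by
      have := (Fintype.mem_piFinset.mp hg) v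
      simp only [Finset.mem_filter] at this
      exact ⟨this.2.2.2.1, this.2.2.1⟩))
    (j := fun c _ => fun v => (c.i1 v, c.i2 v)) ?_ ?_ ?_ ?_ ?_
  · intro g hg
    have hg' := Fintype.mem_piFinset.mp hg
    simp only [Finset.mem_filter, Finset.mem_univ, true_and] at hg' ⊢
    constructor
    · intro v hb
      exact (hg' v).1 hb.symm
    · funext v
      exact (hg' v).2.2.2
  · intro c hc
    simp only [Finset.mem_filter, Finset.mem_univ, true_and] at hc
    rw [Fintype.mem_piFinset]
    intro v
    simp only [Finset.mem_filter, Finset.mem_univ, true_and]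
    refine ⟨fun h => hc.1 v h.symm, c.edge_eq v, c.tail_eq v, ?_⟩
    have := congrFun hc.2 v
    exact this
  · intro g hg; funext v; rfl
  · intro c hc; exact PreContributor.ext' rfl rfl
  · intro g hg; rfl

end AuxDev
section AuxDev2

open Finset PreContributor

variable {V : Type} [Fintype V] [DecidableEq V] {G : OrientedHypergraph V}

/-- L3: regrouping a sum over permutations and matching contributors. -/
lemma sum_over_perms (F : PreContributor G → ℤ) :
    (∑ σ : Equiv.Perm V, ∑ c ∈ Finset.univ.filter (fun c : PreContributor G =>
        (∀ v, ¬ c.BackstepAt v) ∧ c.head = ⇑σ), F c) =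
      ∑ c ∈ Finset.univ.filter (fun c : PreContributor G => c.IsStrongContributor), F c := by
  simp only [Finset.sum_filter]
  rw [Finset.sum_comm]
  refine Finset.sum_congr rfl fun c _ => ?_
  by_cases hc : c.IsStrongContributor
  · simp only [if_pos hc]
    have hbij : Function.Bijective c.head :=
      (Finite.surjective_iff_bijective).mp hc.1
    set σ0 : Equiv.Perm V := Equiv.ofBijective c.head hbij with hσ0
    rw [Finset.sum_eq_single σ0]
    · rw [if_pos ⟨hc.2, rfl⟩]
    · intro σ _ hne
      rw [if_neg]
      rintro ⟨-, h2⟩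
      exact hne (Equiv.coe_fn_injective (h2.symm.trans rfl))
    · intro h; exact absurd (Finset.mem_univ σ0) h
  · simp only [if_neg hc]
    rw [Finset.sum_eq_zero]
    intro σ _
    rw [if_neg]
    rintro ⟨h1, h2⟩
    refine hc ⟨?_, h1⟩
    rw [PreContributor.IsContributor, h2]
    exact σ.surjective

lemma prod_pm {α : Type*} {s : Finset α} {f : α → ℤ} (h : ∀ a ∈ s, f a = 1 ∨ f a = -1) :
    s.prod f = 1 ∨ s.prod f = -1 := by
  classical
  induction s using Finset.induction_on with
  | empty => simp
  | @insert a s hx ih =>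
    rw [Finset.prod_insert hx]
    rcases h a (Finset.mem_insert_self a s) with h1 | h1 <;>
      rcases ih (fun b hb => h b (Finset.mem_insert_of_mem hb)) with h2 | h2 <;>
        simp [h1, h2]

lemma walkSign_pm (hsgn : ∀ i, G.sgn i = 1 ∨ G.sgn i = -1) (c : PreContributor G) (v : V) :
    c.walkSign v = 1 ∨ c.walkSign v = -1 := by
  unfold PreContributor.walkSign
  rcases hsgn (c.i1 v) with h1 | h1 <;> rcases hsgn (c.i2 v) with h2 | h2 <;> simp [h1, h2]

lemma compSign_eq_prod (c : PreContributor G) (q : Quotient c.compSetoid) :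
    c.compSign q = ∏ v ∈ Finset.univ.filter (fun v => Quotient.mk c.compSetoid v = q),
      c.walkSign v := by
  rw [PreContributor.compSign]
  rw [show {v : V | Quotient.mk c.compSetoid v = q} =
    ↑(Finset.univ.filter (fun v => Quotient.mk c.compSetoid v = q)) by ext; simp]
  exact finprod_mem_coe_finset _ _

lemma compSign_pm (hsgn : ∀ i, G.sgn i = 1 ∨ G.sgn i = -1) (c : PreContributor G)
    (q : Quotient c.compSetoid) : c.compSign q = 1 ∨ c.compSign q = -1 := by
  rw [compSign_eq_prod]
  exact prod_pm (fun v _ => walkSign_pm hsgn c v)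

lemma not_backstepClass {c : PreContributor G} (hc : ∀ v, ¬ c.BackstepAt v)
    (q : Quotient c.compSetoid) : ¬ c.IsBackstepClass q := by
  rintro ⟨v, -, -, hb⟩
  exact hc v hb

/-- L4: the product of walk signs of a backstep-free contributor. -/
lemma prod_walkSign (hsgn : ∀ i, G.sgn i = 1 ∨ G.sgn i = -1) (c : PreContributor G)
    (hc : ∀ v, ¬ c.BackstepAt v) :
    ∏ v, c.walkSign v = (-1 : ℤ) ^ nc c := by
  classical
  have hfib : ∏ v, c.walkSign v =
      ∏ q : Quotient c.compSetoid, ∏ v ∈ Finset.univ.filter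
        (fun v => Quotient.mk c.compSetoid v = q), c.walkSign v := by
    rw [← Finset.prod_fiberwise_of_maps_to (g := fun v => Quotient.mk c.compSetoid v)
      (fun v _ => Finset.mem_univ _)]
  rw [hfib]
  have h1 : ∀ q : Quotient c.compSetoid,
      (∏ v ∈ Finset.univ.filter (fun v => Quotient.mk c.compSetoid v = q), c.walkSign v) =
      if c.compSign q = -1 then (-1 : ℤ) else 1 := by
    intro q
    rcases compSign_pm hsgn c q with h | h <;> rw [← compSign_eq_prod, h] <;> simp
  rw [Finset.prod_congr rfl (fun q _ => h1 q), Finset.prod_ite, Finset.prod_const,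
    Finset.prod_const, one_pow, mul_one]
  congr 1
  rw [PreContributor.nc, Nat.card_eq_fintype_card, Fintype.card_subtype]
  congr 1
  ext q
  simp [not_backstepClass hc]

end AuxDev2
section AuxDev3

open Finset PreContributor Equiv

variable {V : Type} [Fintype V] [DecidableEq V] {G : OrientedHypergraph V}

lemma eqvGen_pow (c : PreContributor G) (σ : Equiv.Perm V) (hσ : c.head = ⇑σ) (v : V) :
    ∀ m : ℕ, Relation.EqvGen (fun a b => c.head a = b) v ((σ ^ m) v)
  | 0 => by simpa using Relation.EqvGen.refl v
  | (m+1) => by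
    refine Relation.EqvGen.trans _ _ _ (eqvGen_pow c σ hσ v m) (Relation.EqvGen.rel _ _ ?_)
    rw [hσ]
    rw [pow_succ']
    simp [Equiv.Perm.mul_apply]

/-- L5: component relation is the same-cycle relation of the head permutation. -/
lemma compRel_iff_sameCycle (c : PreContributor G) (σ : Equiv.Perm V) (hσ : c.head = ⇑σ)
    (v w : V) : c.compSetoid.r v w ↔ σ.SameCycle v w := by
  constructor
  · intro h
    induction h with
    | rel a b hab => exact ⟨1, by simp [← hσ, hab]⟩
    | refl a => exact Equiv.Perm.SameCycle.refl σ a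
    | symm a b _ ih => exact ih.symm
    | trans a b d _ _ ih1 ih2 => exact ih1.trans ih2
  · rintro ⟨n, hn⟩
    rcases n with m | m
    · rw [Int.ofNat_eq_coe, zpow_natCast] at hn
      exact hn ▸ eqvGen_pow c σ hσ v m
    · have : (σ ^ (m + 1)) w = v := by
        rw [zpow_negSucc] at hn
        rw [← hn]
        simp
      exact Relation.EqvGen.symm _ _ (this ▸ eqvGen_pow c σ hσ w (m + 1))

lemma mk_eq_mk_iff (c : PreContributor G) (σ : Equiv.Perm V) (hσ : c.head = ⇑σ) (v w : V) :
    Quotient.mk c.compSetoid v = Quotient.mk c.compSetoid w ↔ σ.SameCycle v w := by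
  rw [Quotient.eq]
  exact compRel_iff_sameCycle c σ hσ v w

/-- L6a: the class of a fixed point is a singleton. -/
lemma compCard_fixed (c : PreContributor G) (σ : Equiv.Perm V) (hσ : c.head = ⇑σ) (x : V)
    (hx : σ x = x) : c.compCard (Quotient.mk c.compSetoid x) = 1 := by
  rw [PreContributor.compCard]
  have : {v : V // Quotient.mk c.compSetoid v = Quotient.mk c.compSetoid x} ≃ Unit := by
    refine ⟨fun _ => PUnit.unit, fun _ => ⟨x, rfl⟩, fun ⟨v, hv⟩ => ?_, fun _ => rfl⟩
    have hvx : σ.SameCycle v x := (mk_eq_mk_iff c σ hσ v x).mp hv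
    obtain ⟨n, hn⟩ := hvx.symm
    have : (σ ^ n) x = x := Function.IsFixedPt.perm_zpow hx n
    simp only [Subtype.ext_iff]
    rw [← hn, this]
  rw [Nat.card_congr this]
  simp

/-- L6b: the class of a non-fixed point is the support of its cycle. -/
lemma compCard_support (c : PreContributor G) (σ : Equiv.Perm V) (hσ : c.head = ⇑σ) (x : V)
    (hx : σ x ≠ x) : c.compCard (Quotient.mk c.compSetoid x) = (σ.cycleOf x).support.card := by
  rw [PreContributor.compCard]
  have : {v : V // Quotient.mk c.compSetoid v = Quotient.mk c.compSetoid x} ≃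
      {v : V // v ∈ (σ.cycleOf x).support} := by
    apply Equiv.subtypeEquivRight
    intro v
    rw [mk_eq_mk_iff c σ hσ v x, Equiv.Perm.mem_support_cycleOf_iff]
    constructor
    · intro h; exact ⟨h.symm, Equiv.Perm.mem_support.mpr hx⟩
    · intro h; exact h.1.symm
  rw [Nat.card_congr this]
  exact Nat.card_eq_finsetCard _

end AuxDev3
section AuxDev4

open Finset PreContributor Equiv

variable {V : Type} [Fintype V] [DecidableEq V] {G : OrientedHypergraph V}

lemma neg_one_pow_multiset (s : Multiset ℕ) :
    (-1 : ℤ) ^ (s.sum + Multiset.card s) =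
      (-1 : ℤ) ^ Multiset.card (s.filter (fun l => Even l)) := by
  induction s using Multiset.induction_on with
  | empty => simp
  | cons a s ih =>
    simp only [Multiset.sum_cons, Multiset.card_cons, Multiset.filter_cons]
    have h1 : a + s.sum + (Multiset.card s + 1) = (a + 1) + (s.sum + Multiset.card s) := by ring
    rw [h1, pow_add, ih]
    by_cases h : Even a
    · rw [if_pos h]
      have h2 : (-1 : ℤ) ^ (a + 1) = -1 := by rw [pow_succ, h.neg_one_pow, one_mul]
      simp [h2, pow_add]
    · rw [if_neg h]
      have : Even (a + 1) := Odd.add_one (Nat.not_even_iff_odd.mp h)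
      rw [this.neg_one_pow, one_mul]
      simp

/-- L7a: `ec` equals the number of even cycles of the head permutation. -/
lemma ec_eq_even_factors (c : PreContributor G) (σ : Equiv.Perm V) (hσ : c.head = ⇑σ)
    (hc : ∀ v, ¬ c.BackstepAt v) :
    ec c = (σ.cycleFactorsFinset.filter fun f => Even f.support.card).card := by
  classical
  rw [PreContributor.ec, Nat.card_eq_fintype_card, Fintype.card_subtype]
  have hfe : (Finset.univ.filter fun q : Quotient c.compSetoid =>
      ¬ c.IsBackstepClass q ∧ Even (c.compCard q)) =
      Finset.univ.filter (fun q => Even (c.compCard q)) := by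
    ext q; simp [not_backstepClass hc]
  rw [hfe]
  refine Finset.card_bij' (i := fun q _ => σ.cycleOf q.out)
    (j := fun f hf => Quotient.mk c.compSetoid
      ((Equiv.Perm.IsCycle.nonempty_support
        (Equiv.Perm.mem_cycleFactorsFinset_iff.mp (Finset.mem_filter.mp hf).1).1).choose))
    ?_ ?_ ?_ ?_
  · -- maps into filter
    intro q hq
    have hq' := (Finset.mem_filter.mp hq).2
    have hout : Quotient.mk c.compSetoid q.out = q := Quotient.out_eq q
    have hns : σ q.out ≠ q.out := by
      intro hfix
      have := compCard_fixed c σ hσ q.out hfix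
      rw [hout] at this
      rw [this] at hq'
      simp at hq'
    rw [Finset.mem_filter]
    refine ⟨?_, ?_⟩
    · exact Equiv.Perm.cycleOf_mem_cycleFactorsFinset_iff.mpr (Equiv.Perm.mem_support.mpr hns)
    · have := compCard_support c σ hσ q.out hns
      rw [hout] at this
      rwa [← this]
  · -- j maps into filter
    intro f hf
    obtain ⟨hf1, hf2⟩ := Finset.mem_filter.mp hf
    set x := (Equiv.Perm.IsCycle.nonempty_support
        (Equiv.Perm.mem_cycleFactorsFinset_iff.mp hf1).1).choose with hxdef
    have hxmem : x ∈ f.support := (Equiv.Perm.IsCycle.nonempty_support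
        (Equiv.Perm.mem_cycleFactorsFinset_iff.mp hf1).1).choose_spec
    have hfx : f = σ.cycleOf x := Equiv.Perm.cycle_is_cycleOf hxmem hf1
    have hxns : σ x ≠ x := by
      have h1 := (Equiv.Perm.mem_cycleFactorsFinset_iff.mp hf1).2 x hxmem
      have h2 := Equiv.Perm.mem_support.mp hxmem
      rw [h1] at h2
      exact h2
    rw [Finset.mem_filter]
    refine ⟨Finset.mem_univ _, ?_⟩
    rw [compCard_support c σ hσ x hxns, ← hfx]
    exact hf2
  · -- left inverse : j (i q) = q
    intro q hq
    have hout : Quotient.mk c.compSetoid q.out = q := Quotient.out_eq q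
    set f := σ.cycleOf q.out
    have hns : σ q.out ≠ q.out := by
      intro hfix
      have := compCard_fixed c σ hσ q.out hfix
      rw [hout] at this
      have hq' := (Finset.mem_filter.mp hq).2
      rw [this] at hq'
      simp at hq'
    have hf1 : f ∈ σ.cycleFactorsFinset :=
      Equiv.Perm.cycleOf_mem_cycleFactorsFinset_iff.mpr (Equiv.Perm.mem_support.mpr hns)
    set x := (Equiv.Perm.IsCycle.nonempty_support
        (Equiv.Perm.mem_cycleFactorsFinset_iff.mp hf1).1).choose with hxdef
    have hxmem : x ∈ f.support := (Equiv.Perm.IsCycle.nonempty_support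
        (Equiv.Perm.mem_cycleFactorsFinset_iff.mp hf1).1).choose_spec
    have hsc : σ.SameCycle q.out x := (Equiv.Perm.mem_support_cycleOf_iff.mp hxmem).1
    have h5 := (mk_eq_mk_iff c σ hσ x q.out).mpr hsc.symm
    show Quotient.mk c.compSetoid x = q
    rw [h5, hout]
  · -- right inverse : i (j f) = f
    intro f hf
    obtain ⟨hf1, hf2⟩ := Finset.mem_filter.mp hf
    set x := (Equiv.Perm.IsCycle.nonempty_support
        (Equiv.Perm.mem_cycleFactorsFinset_iff.mp hf1).1).choose with hxdef
    have hxmem : x ∈ f.support := (Equiv.Perm.IsCycle.nonempty_support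
        (Equiv.Perm.mem_cycleFactorsFinset_iff.mp hf1).1).choose_spec
    have hfx : f = σ.cycleOf x := Equiv.Perm.cycle_is_cycleOf hxmem hf1
    set q := Quotient.mk c.compSetoid x with hq
    have hout : Quotient.mk c.compSetoid q.out = q := Quotient.out_eq q
    have hsc : σ.SameCycle q.out x :=
      (mk_eq_mk_iff c σ hσ q.out x).mp (hout.trans hq)
    show σ.cycleOf q.out = f
    rw [hsc.cycleOf_eq, ← hfx]

/-- L7: the sign of the head permutation of a backstep-free contributor. -/
lemma sign_eq_ec (c : PreContributor G) (σ : Equiv.Perm V) (hσ : c.head = ⇑σ)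
    (hc : ∀ v, ¬ c.BackstepAt v) :
    ((Equiv.Perm.sign σ : ℤˣ) : ℤ) = (-1 : ℤ) ^ ec c := by
  rw [Equiv.Perm.sign_of_cycleType]
  push_cast
  rw [neg_one_pow_multiset, ec_eq_even_factors c σ hσ hc]
  congr 1
  rw [Equiv.Perm.cycleType_def, Multiset.filter_map, Multiset.card_map]
  have h3 : (σ.cycleFactorsFinset.filter fun f => Even f.support.card).card =
      Multiset.card (Multiset.filter (fun f : Equiv.Perm V => Even f.support.card)
        σ.cycleFactorsFinset.val) := rfl
  rw [h3]
  exact congrArg _ (Multiset.filter_congr (fun x _ => Iff.rfl))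

end AuxDev4

lemma sum_perm_reindex {V : Type} [Fintype V] [DecidableEq V]
    {M : Type} [AddCommMonoid M] (f : Equiv.Perm V → M) :
    ∑ σ : Equiv.Perm V, f σ = ∑ σ : Equiv.Perm V, f σ⁻¹ :=
  (Fintype.sum_equiv (Equiv.inv (Equiv.Perm V)) _ _ (fun σ => rfl)).symm

lemma prod_entries_reindex {V : Type} [Fintype V] [DecidableEq V]
    (A : Matrix V V ℤ) (σ : Equiv.Perm V) :
    ∏ i, A (σ⁻¹ i) i = ∏ v, A v (σ v) := by
  rw [← Equiv.prod_comp σ (fun i => A (σ⁻¹ i) i)]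
  simp

open PreContributor in
/-- For an oriented hypergraph `G` with adjacency matrix `A_G`,
`perm(A_G) = ∑_{c ∈ C₀(G)} (−1)^{nc(c)}` and
`det(A_G) = ∑_{c ∈ C₀(G)} (−1)^{ec(c)+nc(c)}`, where `C₀(G)` is the set of
backstep-free (strong) contributors of `G`, and `ec`, `nc` count even and negative
circles of `c`. -/
theorem adj_perm_det_strong_contributors {V : Type} [Fintype V] [DecidableEq V]
    (G : OrientedHypergraph V) (hsgn : ∀ i, G.sgn i = 1 ∨ G.sgn i = -1) :
    G.adjMatrix.permanent =
      (∑ᶠ c ∈ {c : PreContributor G | c.IsStrongContributor}, (-1 : ℤ) ^ nc c) ∧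
    G.adjMatrix.det =
      (∑ᶠ c ∈ {c : PreContributor G | c.IsStrongContributor},
        (-1 : ℤ) ^ (ec c + nc c)) := by
  classical
  have hset : {c : PreContributor G | c.IsStrongContributor} =
      ↑(Finset.univ.filter (fun c : PreContributor G => c.IsStrongContributor)) := by
    ext; simp
  constructor
  · rw [Matrix.permanent, sum_perm_reindex, hset, finsum_mem_coe_finset,
      ← sum_over_perms (fun c => (-1 : ℤ) ^ nc c)]
    refine Finset.sum_congr rfl fun σ _ => ?_
    rw [prod_entries_reindex, prod_adj]
    refine Finset.sum_congr rfl fun c hc => ?_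
    obtain ⟨hc1, -⟩ := (Finset.mem_filter.mp hc).2
    exact prod_walkSign hsgn c hc1
  · rw [Matrix.det_apply, sum_perm_reindex, hset, finsum_mem_coe_finset,
      ← sum_over_perms (fun c => (-1 : ℤ) ^ (ec c + nc c))]
    refine Finset.sum_congr rfl fun σ _ => ?_
    rw [Equiv.Perm.sign_inv, prod_entries_reindex, prod_adj, Finset.smul_sum]
    refine Finset.sum_congr rfl fun c hc => ?_
    obtain ⟨hc1, hc2⟩ := (Finset.mem_filter.mp hc).2
    rw [prod_walkSign hsgn c hc1, Units.smul_def, sign_eq_ec c σ hc2 hc1, smul_eq_mul, ← pow_add]
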